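/- arXiv:1308.6694 — 7 statements merged into one kernel-verified Lean document; each statement's English description precedes it below -/
import Mathlib

section
/- If an infinite word ω over a finite alphabet is C-balanced for some natural number C, then the frequency of each letter in ω exists, i.e., for each letter i the limit of |ω_{[0,n)}|_i / n as n → ∞ exists. -/
def prefixW {A : Type*} (w : ℕ → A) (n : ℕ) : List A := (List.range n).map w

def IsFactor {A : Type*} (w : ℕ → A) (u : List A) : Prop :=
  ∃ k, u = (List.range u.length).map (fun t => w (k + t))

def applySub {A : Type*} (σ : A → List A) (w : List A) : List A := w.flatMap σ

def SubstOfInf {A : Type*} (σ : A → List A) (w' w : ℕ → A) : Prop :=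
  ∀ m, prefixW w (applySub σ (prefixW w' m)).length = applySub σ (prefixW w' m)

def FactorOfImage {A : Type*} (σ : A → List A) (ω : ℕ → A) (u : List A) : Prop :=
  ∃ w, IsFactor ω w ∧ u <:+: applySub σ w

def BalancedWord {A : Type*} [DecidableEq A] (C : ℕ) (w : ℕ → A) : Prop :=
  ∀ u v, IsFactor w u → IsFactor w v → u.length = v.length →
    ∀ i, |(u.count i : ℤ) - (v.count i : ℤ)| ≤ (C : ℤ)

open Filter Topology

/-- Fekete's lemma up to an additive error: `u + C` is subadditive. -/
theorem exists_tendsto_div_of_add_le_add_add_const {u : ℕ → ℝ} {C : ℝ}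
    (hu : ∀ n, 0 ≤ u n) (hC : 0 ≤ C) (hadd : ∀ m n, u (m + n) ≤ u m + u n + C) :
    ∃ f : ℝ, Tendsto (fun n => u n / n) atTop (𝓝 f) := by
  have hsub : Subadditive (fun n => u n + C) := fun m n => by linarith [hadd m n]
  have hbdd : BddBelow (Set.range fun n : ℕ => (u n + C) / n) :=
    ⟨0, by rintro _ ⟨n, rfl⟩; exact div_nonneg (add_nonneg (hu n) hC) n.cast_nonneg⟩
  refine ⟨hsub.lim, ?_⟩
  have hshift := (hsub.tendsto_lim hbdd).sub (tendsto_const_div_atTop_nhds_zero_nat C)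
  rw [sub_zero] at hshift
  refine hshift.congr' ?_
  filter_upwards [eventually_ne_atTop 0] with n hn
  rw [add_div, add_sub_cancel_right]

theorem prefixW_add {A : Type*} (ω : ℕ → A) (m n : ℕ) :
    prefixW ω (m + n) = prefixW ω m ++ (List.range n).map (fun t => ω (m + t)) := by
  simp [prefixW, List.range_add, Function.comp]

theorem isFactor_map_range {A : Type*} (ω : ℕ → A) (m n : ℕ) :
    IsFactor ω ((List.range n).map (fun t => ω (m + t))) :=
  ⟨m, by simp⟩

theorem BalancedWord.count_prefixW_add_le {A : Type*} [DecidableEq A] {C : ℕ} {ω : ℕ → A}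
    (hbal : BalancedWord C ω) (i : A) (m n : ℕ) :
    (prefixW ω (m + n)).count i ≤ (prefixW ω m).count i + (prefixW ω n).count i + C := by
  have hprefix : prefixW ω n = (List.range n).map (fun t => ω (0 + t)) := by
    simp [prefixW]
  have hcompare := abs_le.mp <| hbal _ _ (isFactor_map_range ω m n) (isFactor_map_range ω 0 n)
    (by simp) i
  rw [prefixW_add, List.count_append, hprefix]
  omega

theorem stmt0_general {A : Type*} [DecidableEq A] (ω : ℕ → A) (C : ℕ)
    (hbal : BalancedWord C ω) :
    ∀ i : A, ∃ f : ℝ, Filter.Tendsto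
      (fun n => (((prefixW ω n).count i : ℝ) / (n : ℝ))) Filter.atTop (nhds f) := by
  intro i
  refine exists_tendsto_div_of_add_le_add_add_const (fun n => Nat.cast_nonneg _)
    C.cast_nonneg fun m n => ?_
  exact_mod_cast hbal.count_prefixW_add_le i m n

theorem stmt0 {A : Type*} [Fintype A] [DecidableEq A] (ω : ℕ → A) (C : ℕ)
    (hbal : BalancedWord C ω) :
    ∀ i : A, ∃ f : ℝ, Filter.Tendsto
      (fun n => (((prefixW ω n).count i : ℝ) / (n : ℝ))) Filter.atTop (nhds f) :=
  stmt0_general ω C hbal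
end

section
/- For every infinite word ω with letter frequencies, the balance B(ω) and the discrepancy Δ(ω) satisfy Δ(ω) ≤ B(ω) ≤ 4·Δ(ω). In particular, ω is finitely balanced if and only if it has finite discrepancy. -/
open scoped ENNReal

noncomputable def BalanceE {A : Type*} [DecidableEq A] (ω : ℕ → A) : ℝ≥0∞ :=
  ⨆ (p : {p : List A × List A // IsFactor ω p.1 ∧ IsFactor ω p.2 ∧ p.1.length = p.2.length})
    (i : A), (((p.1.1.count i : ℤ) - (p.1.2.count i : ℤ)).natAbs : ℝ≥0∞)

noncomputable def DiscE {A : Type*} [DecidableEq A] (ω : ℕ → A) (f : A → ℝ) : ℝ≥0∞ :=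
  ⨆ (i : A) (n : ℕ), ENNReal.ofReal |((prefixW ω n).count i : ℝ) - (n : ℝ) * f i|

/-!
The two inequalities compare the same quantity in two ways. If all equal-length factors are
`C`-balanced, the prefix counts `c m` of a letter are `C`-quasi-additive,
`|c (k + n) - c k - c n| ≤ C`; iterating gives `|c (k n) - k c n| ≤ k C`, and dividing by `k n` and
letting `k → ∞` yields `|c n - n f| ≤ C`. Conversely a factor of length `n` at position `k` has
`c (k + n) - c k` occurrences, which lies within `2 Δ` of `n f`; two such factors thus differ by at
most `4 Δ`.
-/

open Filter Topology

section QuasiAdditive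

variable {c : ℕ → ℝ} {C : ℝ}

theorem abs_sub_succ_mul_le_of_quasiAdditive (hc : ∀ k n, |c (k + n) - c k - c n| ≤ C)
    (n k : ℕ) : |c ((k + 1) * n) - (k + 1) * c n| ≤ (k + 1) * C := by
  induction k with
  | zero => simpa using (abs_nonneg _).trans (hc 0 0)
  | succ k ih =>
    have hstep := hc ((k + 1) * n) n
    rw [show (k + 1 + 1) * n = (k + 1) * n + n by ring]
    push_cast
    rw [abs_le] at ih hstep ⊢
    constructor <;> nlinarith

theorem abs_sub_mul_le_of_quasiAdditive (hc : ∀ k n, |c (k + n) - c k - c n| ≤ C) {α : ℝ}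
    (hα : Tendsto (fun n => c n / n) atTop (𝓝 α)) (n : ℕ) : |c n - n * α| ≤ C := by
  rcases n.eq_zero_or_pos with rfl | hn
  · simpa using hc 0 0
  have hmul : Tendsto (fun k : ℕ => (k + 1) * n) atTop atTop :=
    tendsto_atTop_mono (fun k => (Nat.le_succ k).trans (Nat.le_mul_of_pos_right _ hn)) tendsto_id
  have hlim : Tendsto (fun k : ℕ => n * (c ((k + 1) * n) / ((k + 1) * n : ℕ)) - c n) atTop
      (𝓝 (n * α - c n)) :=
    ((hα.comp hmul).const_mul _).sub_const _
  have hbound : ∀ k : ℕ, |n * (c ((k + 1) * n) / ((k + 1) * n : ℕ)) - c n| ≤ C := by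
    intro k
    have hk : (0 : ℝ) < k + 1 := by positivity
    have h := abs_sub_succ_mul_le_of_quasiAdditive hc n k
    rw [show n * (c ((k + 1) * n) / ((k + 1) * n : ℕ)) - c n
        = (c ((k + 1) * n) - (k + 1) * c n) / (k + 1) by push_cast; field_simp,
      abs_div, abs_of_pos hk, div_le_iff₀ hk]
    linarith
  rw [abs_sub_comm]
  exact le_of_tendsto' hlim.abs hbound

end QuasiAdditive

theorem abs_sub_sub_le_of_abs_sub_mul_le {c : ℕ → ℝ} {α D : ℝ} (hD : ∀ m, |c m - m * α| ≤ D)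
    (k l n : ℕ) : |(c (k + n) - c k) - (c (l + n) - c l)| ≤ 4 * D := by
  have h₁ := hD (k + n)
  have h₂ := hD k
  have h₃ := hD (l + n)
  have h₄ := hD l
  push_cast at h₁ h₃
  rw [abs_le] at h₁ h₂ h₃ h₄ ⊢
  constructor <;> linarith

theorem natAbs_sub_natCast_eq_ofReal_abs (a b : ℕ) :
    ((((a : ℤ) - b).natAbs : ℕ) : ℝ≥0∞) = ENNReal.ofReal |(a : ℝ) - b| := by
  rw [← ENNReal.ofReal_natCast, Nat.cast_natAbs, Int.cast_abs]
  push_cast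
  rfl

section Words

variable {A : Type*} [DecidableEq A] (ω : ℕ → A)

def factorAt (k n : ℕ) : List A := (List.range n).map fun t => ω (k + t)

omit [DecidableEq A] in
theorem isFactor_factorAt (k n : ℕ) : IsFactor ω (factorAt ω k n) :=
  ⟨k, by simp [factorAt]⟩

omit [DecidableEq A] in
theorem IsFactor.exists_eq_factorAt {ω : ℕ → A} {u : List A} (hu : IsFactor ω u) :
    ∃ k, u = factorAt ω k u.length :=
  hu

omit [DecidableEq A] in
theorem factorAt_zero (n : ℕ) : factorAt ω 0 n = prefixW ω n := by
  simp [factorAt, prefixW]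

theorem count_factorAt (i : A) (k n : ℕ) :
    ((factorAt ω k n).count i : ℝ) = (prefixW ω (k + n)).count i - (prefixW ω k).count i := by
  simp only [prefixW, factorAt, List.range_add, List.map_append, List.count_append, List.map_map]
  push_cast
  ring_nf
  rfl

theorem ofReal_abs_count_sub_count_le_balanceE {u v : List A} (hu : IsFactor ω u)
    (hv : IsFactor ω v) (hlen : u.length = v.length) (i : A) :
    ENNReal.ofReal |(u.count i : ℝ) - v.count i| ≤ BalanceE ω := by
  rw [← natAbs_sub_natCast_eq_ofReal_abs]
  exact le_iSup₂_of_le (f := fun (p : {p : List A × List A //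
      IsFactor ω p.1 ∧ IsFactor ω p.2 ∧ p.1.length = p.2.length}) (i : A) =>
    (((p.1.1.count i : ℤ) - (p.1.2.count i : ℤ)).natAbs : ℝ≥0∞)) ⟨(u, v), hu, hv, hlen⟩ i le_rfl

theorem ofReal_abs_count_prefixW_sub_le_discE (f : A → ℝ) (i : A) (n : ℕ) :
    ENNReal.ofReal |((prefixW ω n).count i : ℝ) - n * f i| ≤ DiscE ω f :=
  le_iSup₂_of_le (f := fun (i : A) (n : ℕ) =>
    ENNReal.ofReal |((prefixW ω n).count i : ℝ) - (n : ℝ) * f i|) i n le_rfl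

theorem discE_le_balanceE {f : A → ℝ}
    (hf : ∀ i, Tendsto (fun n => ((prefixW ω n).count i : ℝ) / n) atTop (𝓝 (f i))) :
    DiscE ω f ≤ BalanceE ω := by
  by_cases hB : BalanceE ω = ⊤
  · exact hB ▸ le_top
  refine iSup₂_le fun i n => ?_
  rw [← ENNReal.ofReal_toReal hB]
  refine ENNReal.ofReal_le_ofReal (abs_sub_mul_le_of_quasiAdditive (fun k n => ?_) (hf i) n)
  have h := ofReal_abs_count_sub_count_le_balanceE ω (isFactor_factorAt ω k n)
    (isFactor_factorAt ω 0 n) (by simp [factorAt]) i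
  rw [count_factorAt, factorAt_zero, ENNReal.ofReal_le_iff_le_toReal hB] at h
  exact h

theorem balanceE_le_four_mul_discE (f : A → ℝ) : BalanceE ω ≤ 4 * DiscE ω f := by
  by_cases hD : DiscE ω f = ⊤
  · simp [hD]
  refine iSup₂_le fun ⟨⟨u, v⟩, hu, hv, hlen⟩ i => ?_
  dsimp only at hu hv hlen ⊢
  obtain ⟨k, hk⟩ := hu.exists_eq_factorAt
  obtain ⟨l, hl⟩ := hv.exists_eq_factorAt
  have hdisc (m : ℕ) : |((prefixW ω m).count i : ℝ) - m * f i| ≤ (DiscE ω f).toReal :=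
    (ENNReal.ofReal_le_iff_le_toReal hD).mp (ofReal_abs_count_prefixW_sub_le_discE ω f i m)
  rw [natAbs_sub_natCast_eq_ofReal_abs, hk, hl, count_factorAt, count_factorAt, hlen,
    ← ENNReal.ofReal_toReal hD, ← ENNReal.ofReal_ofNat, ← ENNReal.ofReal_mul (by norm_num)]
  exact ENNReal.ofReal_le_ofReal (abs_sub_sub_le_of_abs_sub_mul_le hdisc _ _ _)

end Words

theorem stmt2_general {A : Type*} [DecidableEq A] (ω : ℕ → A) (f : A → ℝ)
    (hf : ∀ i : A, Filter.Tendsto (fun n => (((prefixW ω n).count i : ℝ) / (n : ℝ)))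
      Filter.atTop (nhds (f i))) :
    DiscE ω f ≤ BalanceE ω ∧ BalanceE ω ≤ 4 * DiscE ω f ∧
      (BalanceE ω < ⊤ ↔ DiscE ω f < ⊤) := by
  have hDB := discE_le_balanceE ω hf
  have hBD := balanceE_le_four_mul_discE ω f
  exact ⟨hDB, hBD, hDB.trans_lt, fun h => hBD.trans_lt (ENNReal.mul_lt_top (by norm_num) h)⟩

theorem stmt2 {A : Type*} [Fintype A] [DecidableEq A] (ω : ℕ → A) (f : A → ℝ)
    (hf : ∀ i : A, Filter.Tendsto (fun n => (((prefixW ω n).count i : ℝ) / (n : ℝ)))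
      Filter.atTop (nhds (f i))) :
    DiscE ω f ≤ BalanceE ω ∧ BalanceE ω ≤ 4 * DiscE ω f ∧
      (BalanceE ω < ⊤ ↔ DiscE ω f < ⊤) :=
  stmt2_general ω f hf
end

section
/- Let σ be a substitution over a finite alphabet A such that the images σ(b) of all letters b start with the same letter a. If u, v are nonempty factors of an infinite word ω with abelianization difference Δ = Ab(u) − Ab(v), then for every p ∈ {0, ±1, ±2} the word σ(ω) contains factors u', v' with Ab(u') − Ab(v') = M_σ·Δ + p·e_a, where e_a is the a-th standard basis vector. -/
/-! Since every `σ b` begins with `a`, the image `σ u` of a factor `u` of `ω` can be extended by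
one `a` (the first letter of the image of the letter following `u` in `ω`), or, as `u ≠ []`,
shortened by its leading `a`. This realizes `Ab (σ u) + ε e_a = M_σ Ab u + ε e_a` for each
`ε ∈ {0, 1, -1}`, and every `p ∈ {0, ±1, ±2}` is a difference of two such `ε`. -/

lemma Fintype.sum_list_map_count {ι M : Type*} [Fintype ι] [DecidableEq ι] [AddCommMonoid M]
    (l : List ι) (f : ι → M) : (l.map f).sum = ∑ m, l.count m • f m := by
  rw [Finset.sum_list_map_count]
  refine Finset.sum_subset (Finset.subset_univ _) fun m _ hm => ?_
  rw [List.count_eq_zero_of_not_mem (by simpa using hm), zero_smul]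

lemma count_applySub {A : Type*} [Fintype A] [DecidableEq A] (σ : A → List A) (u : List A)
    (i : A) : ((applySub σ u).count i : ℤ) = ∑ j, ((σ j).count i : ℤ) * (u.count j : ℤ) := by
  rw [applySub, List.count_flatMap, Nat.cast_list_sum, List.map_map,
    Fintype.sum_list_map_count]
  exact Finset.sum_congr rfl fun j _ => by rw [nsmul_eq_mul, mul_comm]; rfl

section Factors

variable {A : Type*} {σ : A → List A} {ω : ℕ → A} {u : List A}

lemma IsFactor.exists_append_singleton (hu : IsFactor ω u) : ∃ b, IsFactor ω (u ++ [b]) := by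
  obtain ⟨k, hk⟩ := hu
  refine ⟨ω (k + u.length), k, ?_⟩
  rw [List.length_append, List.length_singleton, List.range_succ, List.map_append, ← hk,
    List.map_singleton]

lemma applySub_append (w : List A) : applySub σ (u ++ w) = applySub σ u ++ applySub σ w :=
  List.flatMap_append

lemma applySub_head? {a : A} (hσ : ∀ b, (σ b).head? = some a) (hne : u ≠ []) :
    (applySub σ u).head? = some a := by
  obtain ⟨b, u, rfl⟩ := List.exists_cons_of_ne_nil hne
  rw [applySub, List.flatMap_cons, List.head?_append, hσ b, Option.some_or]

lemma IsFactor.factorOfImage_applySub (hu : IsFactor ω u) : FactorOfImage σ ω (applySub σ u) :=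
  ⟨u, hu, List.infix_refl _⟩

lemma IsFactor.factorOfImage_applySub_tail (hu : IsFactor ω u) :
    FactorOfImage σ ω (applySub σ u).tail :=
  ⟨u, hu, (List.tail_suffix _).isInfix⟩

lemma IsFactor.factorOfImage_applySub_append {a : A} (hσ : ∀ b, (σ b).head? = some a)
    (hu : IsFactor ω u) : FactorOfImage σ ω (applySub σ u ++ [a]) := by
  obtain ⟨b, hb⟩ := hu.exists_append_singleton
  refine ⟨u ++ [b], hb, List.IsPrefix.isInfix ?_⟩
  rw [applySub_append, List.prefix_append_right_inj, applySub, List.flatMap_singleton,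
    ← List.cons_head?_tail (hσ b)]
  exact ⟨_, rfl⟩

end Factors

lemma exists_factorOfImage_count_eq {A : Type*} [DecidableEq A] {σ : A → List A} {a : A}
    (hσ : ∀ b, (σ b).head? = some a) {ω : ℕ → A} {u : List A} (hu : IsFactor ω u)
    (hne : u ≠ []) {ε : ℤ} (hε : ε ∈ ({0, 1, -1} : Set ℤ)) :
    ∃ u', FactorOfImage σ ω u' ∧ ∀ i : A,
      (u'.count i : ℤ) = (applySub σ u).count i + ε * if i = a then 1 else 0 := by
  rcases hε with rfl | rfl | rfl
  · exact ⟨_, hu.factorOfImage_applySub, fun i => by simp⟩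
  · refine ⟨_, hu.factorOfImage_applySub_append hσ, fun i => ?_⟩
    rw [List.count_append, List.count_singleton]
    by_cases h : i = a <;> simp [h, Ne.symm]
  · refine ⟨_, hu.factorOfImage_applySub_tail, fun i => ?_⟩
    rw [← List.cons_head?_tail (applySub_head? hσ hne), List.count_cons]
    by_cases h : i = a <;> simp [h, Ne.symm]

lemma Int.exists_sub_eq_of_mem {p : ℤ} (hp : p ∈ ({0, 1, -1, 2, -2} : Set ℤ)) :
    ∃ x ∈ ({0, 1, -1} : Set ℤ), ∃ y ∈ ({0, 1, -1} : Set ℤ), x - y = p := by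
  rcases hp with rfl | rfl | rfl | rfl | rfl
  · exact ⟨0, by simp, 0, by simp, rfl⟩
  · exact ⟨1, by simp, 0, by simp, rfl⟩
  · exact ⟨0, by simp, 1, by simp, rfl⟩
  · exact ⟨1, by simp, -1, by simp, rfl⟩
  · exact ⟨-1, by simp, 1, by simp, rfl⟩

theorem stmt3 {A : Type*} [Fintype A] [DecidableEq A] (σ : A → List A) (a : A)
    (hσ : ∀ b : A, (σ b).head? = some a)
    (ω : ℕ → A) (u v : List A) (hu : IsFactor ω u) (hv : IsFactor ω v)
    (hune : u ≠ []) (hvne : v ≠ [])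
    (p : ℤ) (hp : p ∈ ({0, 1, -1, 2, -2} : Set ℤ)) :
    ∃ u' v', FactorOfImage σ ω u' ∧ FactorOfImage σ ω v' ∧
      ∀ i : A, (u'.count i : ℤ) - (v'.count i : ℤ) =
        (∑ j : A, ((σ j).count i : ℤ) * ((u.count j : ℤ) - (v.count j : ℤ)))
          + p * (if i = a then 1 else 0) := by
  obtain ⟨εu, hεu, εv, hεv, rfl⟩ := Int.exists_sub_eq_of_mem hp
  obtain ⟨u', hu', hcount_u'⟩ := exists_factorOfImage_count_eq hσ hu hune hεu
  obtain ⟨v', hv', hcount_v'⟩ := exists_factorOfImage_count_eq hσ hv hvne hεv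
  refine ⟨u', v', hu', hv', fun i => ?_⟩
  simp only [hcount_u', hcount_v', count_applySub, mul_sub, Finset.sum_sub_distrib]
  ring
end

section
/- For an Arnoux-Rauzy directive sequence (α_{i_n})_{n∈ℕ} over d ≥ 2 letters, define v^{(n)} = (M_{[0,n)})^T·𝟏 / ‖(M_{[0,n)})^T·𝟏‖_1, where M_{[0,n)} is the product of the incidence matrices of α_{i_0},…,α_{i_{n-1}}. Then ‖v^{(n)}‖_∞ < 1/(d−1) for all n ≥ 1 (and ‖v^{(0)}‖_∞ = 1/d). -/
open Matrix

def prodSeq {d : ℕ} (M : ℕ → Matrix (Fin d) (Fin d) ℝ) : ℕ → Matrix (Fin d) (Fin d) ℝ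
  | 0 => 1
  | n + 1 => prodSeq M n * M n

def ARmat (d : ℕ) (i : Fin d) : Matrix (Fin d) (Fin d) ℝ :=
  Matrix.of fun r c => if r = i ∨ r = c then 1 else 0

noncomputable def ARv (d : ℕ) (i : ℕ → Fin d) (n : ℕ) : Fin d → ℝ :=
  fun j => ((prodSeq (fun m => ARmat d (i m)) n)ᵀ.mulVec (fun _ => 1)) j /
    ∑ c, ((prodSeq (fun m => ARmat d (i m)) n)ᵀ.mulVec (fun _ => 1)) c

lemma ARmat_transpose_mulVec {d : ℕ} (k : Fin d) (w : Fin d → ℝ) (j : Fin d) :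
    ((ARmat d k)ᵀ.mulVec w) j = w j + (if j = k then 0 else w k) := by
  simp only [mulVec, dotProduct, transpose_apply, ARmat, of_apply]
  by_cases h : j = k
  · subst h
    simp
  · have : ∀ r : Fin d, (if r = k ∨ r = j then (1:ℝ) else 0) * w r
        = (if r = k then (1:ℝ) else 0) * w r + (if r = j then (1:ℝ) else 0) * w r := by
      intro r
      by_cases hk : r = k <;> by_cases hj : r = j <;> simp_all
    rw [Finset.sum_congr rfl fun r _ => this r, Finset.sum_add_distrib]
    simp [if_neg h]
    ring

theorem stmt4 (d : ℕ) (hd : 2 ≤ d) (i : ℕ → Fin d)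
    (hAR : ∀ a : Fin d, ∀ N : ℕ, ∃ n ≥ N, i n = a) :
    (∀ j, ARv d i 0 j = 1 / (d : ℝ)) ∧
    (∀ n ≥ 1, ∀ j, |ARv d i n j| < 1 / ((d : ℝ) - 1)) := by
  set W : ℕ → Fin d → ℝ :=
    fun n => (prodSeq (fun m => ARmat d (i m)) n)ᵀ.mulVec (fun _ => 1) with hW
  have hWsucc : ∀ n, W (n + 1) = (ARmat d (i n))ᵀ.mulVec (W n) := by
    intro n
    simp only [hW]
    rw [show prodSeq (fun m => ARmat d (i m)) (n + 1)
        = prodSeq (fun m => ARmat d (i m)) n * ARmat d (i n) from rfl,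
      transpose_mul, ← mulVec_mulVec]
  have hW0 : ∀ j, W 0 j = 1 := by
    intro j
    simp [hW, prodSeq, mulVec, dotProduct, Matrix.one_apply]
  have hdpos : (0:ℝ) < (d:ℝ) - 1 := by
    have : (2:ℝ) ≤ (d:ℝ) := by exact_mod_cast hd
    linarith
  -- the invariant
  have key : ∀ n, (∀ j, 0 < W n j) ∧ (∀ j, ((d:ℝ) - 1) * W n j < ∑ c, W n c) := by
    intro n
    induction n with
    | zero =>
      constructor
      · intro j; rw [hW0 j]; norm_num
      · intro j
        rw [hW0 j]
        have : ∑ c, W 0 c = d := by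
          rw [Finset.sum_congr rfl fun c _ => hW0 c]
          simp
        rw [this]
        linarith
    | succ n ih =>
      obtain ⟨hpos, hlt⟩ := ih
      set k := i n
      have hstep : ∀ j, W (n + 1) j = W n j + (if j = k then 0 else W n k) := by
        intro j
        rw [hWsucc n]
        exact ARmat_transpose_mulVec k (W n) j
      have hsum : ∑ c, W (n + 1) c = (∑ c, W n c) + ((d:ℝ) - 1) * W n k := by
        rw [Finset.sum_congr rfl fun c _ => hstep c, Finset.sum_add_distrib]
        have : ∑ c : Fin d, (if c = k then (0:ℝ) else W n k)
            = ∑ c : Fin d, (W n k - if c = k then W n k else 0) := by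
          refine Finset.sum_congr rfl fun c _ => ?_
          split <;> ring
        rw [this, Finset.sum_sub_distrib]
        simp [Finset.card_univ]
        ring
      constructor
      · intro j
        rw [hstep j]
        split
        · simpa using hpos j
        · have := hpos j; have := hpos k; linarith
      · intro j
        rw [hstep j, hsum]
        by_cases hj : j = k
        · rw [if_pos hj, hj]
          have h1 := hlt k
          have h2 := hpos k
          nlinarith
        · rw [if_neg hj]
          have h1 := hlt j
          nlinarith
  obtain ⟨hpos0, _⟩ := key 0
  have hsumpos : ∀ n, 0 < ∑ c, W n c := by
    intro n
    exact Finset.sum_pos (fun c _ => (key n).1 c) ⟨⟨0, by omega⟩, Finset.mem_univ _⟩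
  constructor
  · intro j
    show W 0 j / (∑ c, W 0 c) = 1 / (d:ℝ)
    rw [hW0 j]
    have : ∑ c, W 0 c = d := by
      rw [Finset.sum_congr rfl fun c _ => hW0 c]; simp
    rw [this]
  · intro n hn j
    obtain ⟨hpos, hlt⟩ := key n
    show |W n j / (∑ c, W n c)| < 1 / ((d:ℝ) - 1)
    rw [abs_of_pos (div_pos (hpos j) (hsumpos n)), div_lt_div_iff₀ (hsumpos n) hdpos]
    have := hlt j
    linarith
end

section
/- Let (α_{i_n})_{n∈ℕ} be an Arnoux-Rauzy directive sequence over d letters and v^{(n)} = (M_{[0,n)})^T·𝟏/‖(M_{[0,n)})^T·𝟏‖_1. If {i_n, i_{n+1}, …, i_{n+h−1}} = A (all d letters appear among indices n, …, n+h−1), then ‖v^{(n+h)}‖_∞ < (2^h − 1)/(2^h (d−1)). -/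
open Matrix

noncomputable def wf {d : ℕ} (i : ℕ → Fin d) (n : ℕ) (j : Fin d) : ℝ :=
  ∑ r, prodSeq (fun m => ARmat d (i m)) n r j

noncomputable def Sf {d : ℕ} (i : ℕ → Fin d) (n : ℕ) : ℝ := ∑ j, wf i n j

lemma wf_zero {d : ℕ} (i : ℕ → Fin d) (j : Fin d) : wf i 0 j = 1 := by
  simp [wf, prodSeq, Matrix.one_apply]

lemma wf_step {d : ℕ} (i : ℕ → Fin d) (n : ℕ) (j : Fin d) :
    wf i (n + 1) j = if j = i n then wf i n j else wf i n j + wf i n (i n) := by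
  have key : wf i (n + 1) j
      = ∑ k, wf i n k * (if k = i n ∨ k = j then (1:ℝ) else 0) := by
    simp only [wf, prodSeq, Matrix.mul_apply]
    rw [Finset.sum_comm]
    refine Finset.sum_congr rfl fun k _ => ?_
    rw [← Finset.sum_mul]
    rfl
  by_cases hj : j = i n
  · rw [key, if_pos hj, hj]
    simp [mul_ite, Finset.sum_ite_eq']
  · rw [key, if_neg hj]
    have hpt : ∀ k : Fin d, wf i n k * (if k = i n ∨ k = j then (1:ℝ) else 0)
        = (if k = j then wf i n k else 0) + (if k = i n then wf i n k else 0) := by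
      intro k
      by_cases h1 : k = i n
      · have h2 : ¬ i n = j := fun hh => hj hh.symm
        simp [h1, h2]
      · by_cases h2 : k = j <;> simp [h1, h2, hj]
    simp only [hpt, Finset.sum_add_distrib]
    simp

lemma wf_pos {d : ℕ} (i : ℕ → Fin d) (n : ℕ) (j : Fin d) : 0 < wf i n j := by
  induction n generalizing j with
  | zero => rw [wf_zero]; norm_num
  | succ n ih =>
    rw [wf_step]
    by_cases hj : j = i n
    · simp [hj, ih]
    · rw [if_neg hj]; have := ih j; have := ih (i n); linarith

lemma Sf_pos {d : ℕ} [NeZero d] (i : ℕ → Fin d) (n : ℕ) : 0 < Sf i n :=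
  Finset.sum_pos (fun j _ => wf_pos i n j) Finset.univ_nonempty

lemma Sf_step {d : ℕ} (i : ℕ → Fin d) (n : ℕ) :
    Sf i (n + 1) = Sf i n + ((d:ℝ) - 1) * wf i n (i n) := by
  have : ∀ j : Fin d, wf i (n+1) j
      = wf i n j + (wf i n (i n) - if j = i n then wf i n (i n) else 0) := by
    intro j
    rw [wf_step]
    by_cases hj : j = i n <;> simp [hj]
  simp only [Sf, this, Finset.sum_add_distrib, Finset.sum_sub_distrib,
    Finset.sum_const, Finset.sum_ite_eq', Finset.mem_univ, if_pos,
    Finset.card_univ, Fintype.card_fin, nsmul_eq_mul]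
  ring

lemma ARinvlt {d : ℕ} (hd : 2 ≤ d) (i : ℕ → Fin d) (n : ℕ) (j : Fin d) :
    ((d:ℝ) - 1) * wf i n j < Sf i n := by
  have hd1 : (1:ℝ) ≤ (d:ℝ) - 1 := by
    have : (2:ℝ) ≤ (d:ℝ) := by exact_mod_cast hd
    linarith
  induction n generalizing j with
  | zero =>
    rw [wf_zero]
    have : Sf i 0 = (d:ℝ) := by
      simp [Sf, wf_zero, Finset.card_univ]
    rw [this]; linarith
  | succ n ih =>
    rw [wf_step, Sf_step]
    have hw := wf_pos i n (i n)
    by_cases hj : j = i n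
    · rw [if_pos hj, hj]
      have := ih (i n)
      nlinarith
    · rw [if_neg hj]
      have := ih j
      nlinarith

lemma Sf_double {d : ℕ} (hd : 2 ≤ d) (i : ℕ → Fin d) (n : ℕ) :
    Sf i (n + 1) < 2 * Sf i n := by
  rw [Sf_step]
  have := ARinvlt hd i n (i n)
  linarith

lemma Sf_growth {d : ℕ} (hd : 2 ≤ d) (i : ℕ → Fin d) (m N : ℕ) (hmN : m + 1 ≤ N) :
    Sf i N < 2 ^ (N - m) * Sf i m := by
  induction N, hmN using Nat.le_induction with
  | base =>
    have : m + 1 - m = 1 := by omega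
    rw [this, pow_one]
    exact Sf_double hd i m
  | succ N hN ih =>
    have he : N + 1 - m = (N - m) + 1 := by omega
    have h2 := Sf_double hd i N
    rw [he, pow_succ]
    nlinarith

lemma ident {d : ℕ} (i : ℕ → Fin d) (j : Fin d) (m N : ℕ) (hmN : m + 1 ≤ N)
    (hj : i m = j) (hne : ∀ t, m < t → t < N → i t ≠ j) :
    ((d:ℝ) - 1) * wf i N j = Sf i N - Sf i m := by
  induction N, hmN using Nat.le_induction with
  | base =>
    rw [Sf_step, wf_step, hj, if_pos rfl]
    ring
  | succ N hN ih =>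
    have hiN : i N ≠ j := hne N (by omega) (by omega)
    have hjN : j ≠ i N := fun hh => hiN hh.symm
    have hih := ih (fun t ht1 ht2 => hne t ht1 (by omega))
    rw [wf_step, if_neg hjN, Sf_step]
    linarith

theorem stmt5 (d : ℕ) (hd : 2 ≤ d) (i : ℕ → Fin d)
    (hAR : ∀ a : Fin d, ∀ N : ℕ, ∃ n ≥ N, i n = a)
    (n h : ℕ)
    (hall : Finset.image (fun t => i (n + t)) (Finset.range h) = Finset.univ) :
    ∀ j, |ARv d i (n + h) j| < ((2 : ℝ) ^ h - 1) / ((2 : ℝ) ^ h * ((d : ℝ) - 1)) := by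
  intro j
  have hdz : NeZero d := ⟨by omega⟩
  have hd1 : (1:ℝ) ≤ (d:ℝ) - 1 := by
    have : (2:ℝ) ≤ (d:ℝ) := by exact_mod_cast hd
    linarith
  -- rewrite ARv in terms of wf and Sf
  have hw : ∀ c : Fin d,
      ((prodSeq (fun m => ARmat d (i m)) (n+h))ᵀ.mulVec (fun _ => 1)) c = wf i (n+h) c := by
    intro c
    simp [wf, Matrix.mulVec, dotProduct]
  have hv : ARv d i (n + h) j = wf i (n+h) j / Sf i (n+h) := by
    simp only [ARv, hw, Sf]
  -- find the last occurrence of j in the window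
  have hjmem : j ∈ Finset.image (fun t => i (n + t)) (Finset.range h) := by
    rw [hall]; exact Finset.mem_univ j
  obtain ⟨t0, ht0, hjt0⟩ := Finset.mem_image.mp hjmem
  set T : Finset ℕ := (Finset.range h).filter (fun t => i (n + t) = j) with hT
  have hTne : T.Nonempty := ⟨t0, Finset.mem_filter.mpr ⟨ht0, hjt0⟩⟩
  set t := T.max' hTne with htdef
  have htT : t ∈ T := T.max'_mem hTne
  have hth : t < h := Finset.mem_range.mp (Finset.mem_filter.mp htT).1
  have hit : i (n + t) = j := (Finset.mem_filter.mp htT).2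
  have hlast : ∀ u, n + t < u → u < n + h → i u ≠ j := by
    intro u hu1 hu2 hc
    have hs : u - n ∈ T := by
      refine Finset.mem_filter.mpr ⟨Finset.mem_range.mpr (by omega), ?_⟩
      have : n + (u - n) = u := by omega
      rw [this]; exact hc
    have := T.le_max' _ hs
    omega
  -- key identity and growth
  have hid := ident i j (n + t) (n + h) (by omega) hit hlast
  have hgrow := Sf_growth hd i (n + t) (n + h) (by omega)
  have hsub : n + h - (n + t) = h - t := by omega
  rw [hsub] at hgrow
  have hpow : (2:ℝ) ^ (h - t) ≤ 2 ^ h := by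
    apply pow_le_pow_right₀ (by norm_num) (Nat.sub_le h t)
  have hSm : 0 < Sf i (n + t) := Sf_pos i (n + t)
  have hSN : 0 < Sf i (n + h) := Sf_pos i (n + h)
  have hgrow2 : Sf i (n + h) < 2 ^ h * Sf i (n + t) := by
    calc Sf i (n + h) < 2 ^ (h - t) * Sf i (n + t) := hgrow
    _ ≤ 2 ^ h * Sf i (n + t) := by
        exact mul_le_mul_of_nonneg_right hpow (le_of_lt hSm)
  have hwpos := wf_pos i (n + h) j
  have hvpos : 0 < ARv d i (n + h) j := by
    rw [hv]; exact div_pos hwpos hSN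
  rw [abs_of_pos hvpos, hv]
  rw [div_lt_div_iff₀ hSN (by positivity)]
  have hpowpos : (0:ℝ) < 2 ^ h := by positivity
  nlinarith [hid, hgrow2, mul_lt_mul_of_pos_left hgrow2 hpowpos]
end

section
/- For every h ∈ ℕ there is a constant C(h) such that every Arnoux-Rauzy word over d letters whose directive sequence (α_{i_n})_{n∈ℕ} satisfies {i_n, i_{n+1}, …, i_{n+h−1}} = {1,…,d} for all n ∈ ℕ is C(h)-balanced. -/
def ARsub (d : ℕ) (i : Fin d) : Fin d → List (Fin d) := fun j => if j = i then [i] else [i, j]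

open Matrix

namespace ArnouxRauzy

lemma updateCol_one_mulVec_apply {R ι : Type*} [CommRing R] [Fintype ι] [DecidableEq ι]
    (a : ι) (f x : ι → R) (j : ι) :
    ((1 : Matrix ι ι R).updateCol a f *ᵥ x) j = (if j = a then 0 else x j) + x a * f j := by
  simp only [mulVec, dotProduct, updateCol_apply, one_apply, ite_mul, zero_mul, one_mul]
  rw [Finset.sum_ite, Finset.filter_eq', Finset.sum_ite_eq]
  split_ifs <;> simp_all [mul_comm, add_comm]

section ColStochastic

variable {R ι : Type*} [CommRing R] [LinearOrder R] [IsStrictOrderedRing R] [Fintype ι]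

lemma sum_abs_mulVec_le_of_nonneg {M : Matrix ι ι R} {c : R} (hM : ∀ i j, 0 ≤ M i j)
    (hc : ∀ j, ∑ i, M i j ≤ c) (x : ι → R) : ∑ i, |(M *ᵥ x) i| ≤ c * ∑ j, |x j| :=
  calc ∑ i, |(M *ᵥ x) i| ≤ ∑ i, ∑ j, M i j * |x j| := by
        gcongr with i
        refine (Finset.abs_sum_le_sum_abs _ _).trans_eq ?_
        simp [abs_mul, abs_of_nonneg (hM _ _)]
    _ = ∑ j, (∑ i, M i j) * |x j| := by rw [Finset.sum_comm]; simp [Finset.sum_mul]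
    _ ≤ ∑ j, c * |x j| := by gcongr with j; exact hc j
    _ = c * ∑ j, |x j| := by rw [Finset.mul_sum]

variable [DecidableEq ι]

lemma sum_abs_mulVec_le {M : Matrix ι ι R} (hM : M ∈ colStochastic R ι) (x : ι → R) :
    ∑ i, |(M *ᵥ x) i| ≤ ∑ j, |x j| := by
  simpa using sum_abs_mulVec_le_of_nonneg (fun _ _ ↦ nonneg_of_mem_colStochastic hM)
    (fun j ↦ (sum_col_of_mem_colStochastic hM j).le) x

lemma sum_abs_mulVec_le_of_le_apply {M : Matrix ι ι R} {η : R} (hM : M ∈ colStochastic R ι)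
    (hη : ∀ i j, η ≤ M i j) {x : ι → R} (hx : ∑ j, x j = 0) :
    ∑ i, |(M *ᵥ x) i| ≤ (1 - Fintype.card ι * η) * ∑ j, |x j| := by
  -- Doeblin: `M - η` has nonnegative entries and column sums `1 - card ι * η`, and the constant
  -- matrix `η` kills zero-sum vectors.
  have hJx : (of fun _ _ ↦ η : Matrix ι ι R) *ᵥ x = 0 := by
    ext i
    simp [mulVec, dotProduct, ← Finset.mul_sum, hx]
  rw [← sub_zero (M *ᵥ x), ← hJx, ← sub_mulVec]
  refine sum_abs_mulVec_le_of_nonneg (fun i j ↦ by simpa using hη i j) (fun j ↦ le_of_eq ?_) x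
  simp [Finset.sum_sub_distrib, sum_col_of_mem_colStochastic hM]

lemma updateCol_one_mem_colStochastic (a : ι) {f : ι → R} (hf : f ∈ stdSimplex R ι) :
    (1 : Matrix ι ι R).updateCol a f ∈ colStochastic R ι := by
  refine mem_colStochastic_iff_sum.2 ⟨fun i j ↦ ?_, fun j ↦ ?_⟩
  · rw [updateCol_apply]
    split_ifs
    · exact hf.1 i
    · rw [one_apply]
      split_ifs <;> simp
  · by_cases hj : j = a
    · simp [hj, hf.2]
    · simp [updateCol_ne hj, one_apply]

def windowProd (T : ℕ → Matrix ι ι R) : ℕ → ℕ → Matrix ι ι R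
  | _, 0 => 1
  | k, s + 1 => T k * windowProd T (k + 1) s

variable {T : ℕ → Matrix ι ι R}

lemma windowProd_mem_colStochastic (hT : ∀ k, T k ∈ colStochastic R ι) (k s : ℕ) :
    windowProd T k s ∈ colStochastic R ι := by
  induction s generalizing k with
  | zero => exact (colStochastic R ι).one_mem
  | succ s ih => exact (colStochastic R ι).mul_mem (hT k) (ih (k + 1))

lemma sum_abs_sub_windowProd_mulVec_le (hT : ∀ k, T k ∈ colStochastic R ι)
    {x : ℕ → ι → R} {c : R} {k s : ℕ}
    (hx : ∀ k', k ≤ k' → k' < k + s → ∑ i, |(x k' - T k' *ᵥ x (k' + 1)) i| ≤ c) :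
    ∑ i, |(x k - windowProd T k s *ᵥ x (k + s)) i| ≤ s * c := by
  induction s generalizing k with
  | zero => simp [windowProd]
  | succ s ih =>
    have hsplit : x k - windowProd T k (s + 1) *ᵥ x (k + (s + 1)) = (x k - T k *ᵥ x (k + 1)) +
        T k *ᵥ (x (k + 1) - windowProd T (k + 1) s *ᵥ x (k + 1 + s)) := by
      rw [windowProd, mulVec_sub, mulVec_mulVec, show k + (s + 1) = k + 1 + s by omega]
      abel
    have ih' := ih (k := k + 1) fun k' h₁ h₂ ↦ hx k' (by omega) (by omega)
    calc ∑ i, |(x k - windowProd T k (s + 1) *ᵥ x (k + (s + 1))) i|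
        ≤ ∑ i, |(x k - T k *ᵥ x (k + 1)) i| +
          ∑ i, |(T k *ᵥ (x (k + 1) - windowProd T (k + 1) s *ᵥ x (k + 1 + s))) i| := by
          rw [hsplit, ← Finset.sum_add_distrib]
          exact Finset.sum_le_sum fun i _ ↦ abs_add_le _ _
      _ ≤ c + s * c :=
          add_le_add (hx k le_rfl (by omega)) ((sum_abs_mulVec_le (hT k) _).trans ih')
      _ = (s + 1 : ℕ) * c := by push_cast; ring

lemma pow_le_windowProd_apply (hT : ∀ k, T k ∈ colStochastic R ι) {a : ℕ → ι} {ε : R}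
    (hε : 0 ≤ ε) {k s : ℕ}
    (hdiag : ∀ k', k ≤ k' → k' < k + s → ∀ j, ε ≤ T k' j j)
    (hcol : ∀ k', k ≤ k' → k' < k + s → ∀ j, ε ≤ T k' j (a k')) {j l : ι}
    (hjl : j = l ∨ ∃ k', k ≤ k' ∧ k' < k + s ∧ a k' = l) :
    ε ^ s ≤ windowProd T k s j l := by
  -- Along the path that stays at `j` up to the last `k'` with `a k' = l`, moves to `l` through
  -- column `a k'` of `T k'` and then stays at `l`, every factor is at least `ε`.
  induction s generalizing k j with
  | zero =>
    obtain rfl | ⟨k', h₁, h₂, -⟩ := hjl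
    · simp [windowProd]
    · omega
  | succ s ih =>
    have hQ := windowProd_mem_colStochastic hT (k + 1) s
    have ih' := fun j (hjl : j = l ∨ ∃ k', k + 1 ≤ k' ∧ k' < k + 1 + s ∧ a k' = l) ↦
      ih (k := k + 1) (fun k' h₁ h₂ ↦ hdiag k' (by omega) (by omega))
        (fun k' h₁ h₂ ↦ hcol k' (by omega) (by omega)) (j := j) hjl
    have hstep : ∀ r, ε ≤ T k j r → ε ^ s ≤ windowProd T (k + 1) s r l →
        ε ^ (s + 1) ≤ windowProd T k (s + 1) j l := fun r hTr hQr ↦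
      calc ε ^ (s + 1) ≤ T k j r * windowProd T (k + 1) s r l := by
            rw [pow_succ']
            exact mul_le_mul hTr hQr (pow_nonneg hε s) (nonneg_of_mem_colStochastic (hT k))
        _ ≤ windowProd T k (s + 1) j l := by
            rw [windowProd, mul_apply]
            exact Finset.single_le_sum (f := fun r ↦ T k j r * windowProd T (k + 1) s r l)
              (fun r _ ↦ mul_nonneg (nonneg_of_mem_colStochastic (hT k))
                (nonneg_of_mem_colStochastic hQ)) (Finset.mem_univ r)
    by_cases hlater : ∃ k', k + 1 ≤ k' ∧ k' < k + 1 + s ∧ a k' = l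
    · exact hstep j (hdiag k le_rfl (by omega) j) (ih' j (.inr hlater))
    · refine hstep l ?_ (ih' l (.inl rfl))
      rcases hjl with rfl | ⟨k', h₁, h₂, rfl⟩
      · exact hdiag k le_rfl (by omega) j
      · obtain rfl : k' = k := by
          by_contra hne
          exact hlater ⟨k', by omega, by omega, rfl⟩
        exact hcol k' le_rfl (by omega) j

end ColStochastic

lemma le_div_of_forall_le_one_sub_mul_add {R : Type*} [Field R] [LinearOrder R]
    [IsStrictOrderedRing R] {b : ℕ → R} {η c : R} (hη : 0 < η) (hη₁ : η ≤ 1) {K : ℕ}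
    (hb : ∀ t < K, b t ≤ (1 - η) * b (t + 1) + c) (hK : b K ≤ c / η) {t : ℕ}
    (ht : t ≤ K) :
    b t ≤ c / η := by
  induction ht using Nat.decreasingInduction with
  | self => exact hK
  | of_succ t htK ih =>
    calc b t ≤ (1 - η) * b (t + 1) + c := hb t htK
      _ ≤ (1 - η) * (c / η) + c := by gcongr
      _ = c / η := by field_simp; ring

section Words

variable {A : Type*}

@[simp]
lemma length_prefixW (w : ℕ → A) (n : ℕ) : (prefixW w n).length = n := by
  simp [prefixW]

lemma prefixW_add (w : ℕ → A) (m n : ℕ) :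
    prefixW w (m + n) = prefixW w m ++ (List.range n).map fun t ↦ w (m + t) := by
  simp [prefixW, List.range_add, Function.comp_def]

lemma prefixW_succ (w : ℕ → A) (n : ℕ) : prefixW w (n + 1) = prefixW w n ++ [w n] := by
  simp [prefixW, List.range_succ]

lemma applySub_append (σ : A → List A) (u v : List A) :
    applySub σ (u ++ v) = applySub σ u ++ applySub σ v := by
  simp [applySub]

lemma count_prefixW_add_of_isFactor [DecidableEq A] {w : ℕ → A} {u : List A} {k : ℕ}
    (hu : u = (List.range u.length).map fun t ↦ w (k + t)) (j : A) :
    (prefixW w (k + u.length)).count j = (prefixW w k).count j + u.count j := by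
  rw [prefixW_add, List.count_append, ← hu]

lemma balancedWord_of_subsingleton [DecidableEq A] [Subsingleton A] (C : ℕ) (w : ℕ → A) :
    BalancedWord C w := by
  intro u v _ _ hlen j
  rw [List.count_eq_length.2 fun b _ ↦ Subsingleton.elim j b,
    List.count_eq_length.2 fun b _ ↦ Subsingleton.elim j b, hlen]
  simp

lemma balancedWord_of_abs_count_prefixW_sub_le [DecidableEq A] (w : ℕ → A) (B : ℕ)
    (hB : ∀ K, ∃ f : A → ℚ, ∀ m ≤ K, ∀ j,
      |((prefixW w m).count j : ℚ) - m * f j| ≤ B) :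
    BalancedWord (4 * B) w := by
  rintro u v ⟨k, hu⟩ ⟨k', hv⟩ hlen j
  obtain ⟨f, hf⟩ := hB (k + k' + u.length)
  have hcu := count_prefixW_add_of_isFactor hu j
  have hcv := count_prefixW_add_of_isFactor hv j
  rw [← hlen] at hcv
  have h₁ := abs_le.1 (hf (k + u.length) (by omega) j)
  have h₂ := abs_le.1 (hf k (by omega) j)
  have h₃ := abs_le.1 (hf (k' + u.length) (by omega) j)
  have h₄ := abs_le.1 (hf k' (by omega) j)
  have : |(u.count j : ℚ) - v.count j| ≤ ((4 * B : ℕ) : ℚ) := by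
    rw [hcu, hcv] at *
    push_cast at *
    rw [abs_le]
    constructor <;> linarith
  exact_mod_cast this

lemma exists_lt_apply_eq_of_image_eq_univ [Fintype A] [DecidableEq A] {g : ℕ → A} {n h : ℕ}
    (hg : Finset.image (fun t ↦ g (n + t)) (Finset.range h) = Finset.univ) (x : A) :
    ∃ t < h, g (n + t) = x := by
  have hx : x ∈ Finset.image (fun t ↦ g (n + t)) (Finset.range h) := hg ▸ Finset.mem_univ x
  simpa using hx

lemma exists_apply_succ_ne {g : ℕ → A} {n h : ℕ} {x y : A} (hxy : x ≠ y)
    (hx : ∃ t < h, g (n + t) = x) (hy : ∃ t < h, g (n + t) = y) :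
    ∃ t, t + 1 < h ∧ g (n + t + 1) ≠ g (n + t) := by
  by_contra! hconst
  have hg : ∀ t < h, g (n + t) = g n := by
    intro t
    induction t with
    | zero => exact fun _ ↦ rfl
    | succ t ih => intro ht; rw [← add_assoc, hconst t ht, ih (by omega)]
  obtain ⟨tx, htx, rfl⟩ := hx
  obtain ⟨ty, hty, rfl⟩ := hy
  exact hxy (by rw [hg tx htx, hg ty hty])

end Words

section Substitution

variable {d : ℕ}

lemma count_applySub_ARsub (a j : Fin d) (p : List (Fin d)) :
    (applySub (ARsub d a) p).count j = if j = a then p.length else p.count j := by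
  induction p with
  | nil => simp [applySub]
  | cons b p ih =>
    rw [← List.singleton_append, applySub_append, List.count_append, ih]
    grind [applySub, ARsub]

lemma length_applySub_ARsub_add_count (a : Fin d) (p : List (Fin d)) :
    (applySub (ARsub d a) p).length + p.count a = 2 * p.length := by
  induction p with
  | nil => simp [applySub]
  | cons b p ih =>
    rw [← List.singleton_append, applySub_append]
    grind [applySub, ARsub]

variable (a : Fin d) (w' : ℕ → Fin d)

def imageLength (t : ℕ) : ℕ := (applySub (ARsub d a) (prefixW w' t)).length

lemma imageLength_succ (t : ℕ) :
    imageLength a w' (t + 1) = imageLength a w' t + if w' t = a then 1 else 2 := by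
  simp only [imageLength, prefixW_succ, applySub_append, List.length_append]
  split_ifs with h <;> simp [applySub, ARsub, h]

lemma imageLength_zero : imageLength a w' 0 = 0 := by
  simp [imageLength, prefixW, applySub]

lemma lt_imageLength (h₀ : w' 0 ≠ a) {t : ℕ} (ht : 0 < t) : t < imageLength a w' t := by
  induction t with
  | zero => omega
  | succ t ih =>
    rw [imageLength_succ]
    rcases Nat.eq_zero_or_pos t with rfl | ht
    · simp [imageLength_zero, h₀]
    · have := ih ht
      split_ifs <;> omega

lemma le_imageLength (t : ℕ) : t ≤ imageLength a w' t := by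
  induction t with
  | zero => simp
  | succ t ih => rw [imageLength_succ]; split_ifs <;> omega

def desubLength (m : ℕ) : ℕ := Nat.findGreatest (fun t ↦ imageLength a w' t ≤ m) m

lemma desubLength_le (m : ℕ) : desubLength a w' m ≤ m := Nat.findGreatest_le m

lemma imageLength_desubLength_le (m : ℕ) : imageLength a w' (desubLength a w' m) ≤ m :=
  Nat.findGreatest_spec (P := fun t ↦ imageLength a w' t ≤ m) (Nat.zero_le m)
    (by simp [imageLength_zero])

lemma lt_imageLength_desubLength_succ (m : ℕ) :
    m < imageLength a w' (desubLength a w' m + 1) := by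
  by_contra! hle
  exact Nat.findGreatest_is_greatest (Nat.lt_succ_self _)
    ((le_imageLength a w' _).trans hle) hle

lemma desubLength_lt (h₀ : w' 0 ≠ a) {m : ℕ} (hm : 0 < m) : desubLength a w' m < m := by
  refine (desubLength_le a w' m).lt_of_ne fun heq ↦ ?_
  have := imageLength_desubLength_le a w' m
  rw [heq] at this
  exact (lt_imageLength a w' h₀ hm).not_ge this

variable {a w'} {w : ℕ → Fin d}

lemma apply_imageLength_of_substOfInf (hS : SubstOfInf (ARsub d a) w' w) (t : ℕ) :
    w (imageLength a w' t) = a := by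
  -- `w (imageLength a w' t)` is the first letter of `ARsub d a (w' t)`.
  have hlt : imageLength a w' t < imageLength a w' (t + 1) := by
    rw [imageLength_succ]; split_ifs <;> omega
  have h := congrArg (·[imageLength a w' t]?) (hS (t + 1))
  change (prefixW w (imageLength a w' (t + 1)))[imageLength a w' t]? =
    (applySub (ARsub d a) (prefixW w' (t + 1)))[imageLength a w' t]? at h
  rw [prefixW_succ, applySub_append, List.getElem?_append_right
    (i := imageLength a w' t) le_rfl] at h
  rw [show imageLength a w' t - (applySub (ARsub d a) (prefixW w' t)).length = 0 from
    Nat.sub_self _] at h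
  change ((List.range _).map w)[imageLength a w' t]? = _ at h
  rw [List.getElem?_map, List.getElem?_range hlt] at h
  by_cases hw' : w' t = a <;> simpa [applySub, ARsub, hw'] using h

lemma apply_zero_of_substOfInf (hS : SubstOfInf (ARsub d a) w' w) : w 0 = a := by
  simpa [imageLength_zero] using apply_imageLength_of_substOfInf hS 0

lemma exists_prefixW_eq_applySub (hS : SubstOfInf (ARsub d a) w' w) (m : ℕ) :
    ∃ e ≤ 1, prefixW w m =
      applySub (ARsub d a) (prefixW w' (desubLength a w' m)) ++ List.replicate e a := by
  have h₁ := imageLength_desubLength_le a w' m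
  have h₂ := lt_imageLength_desubLength_succ a w' m
  set t := desubLength a w' m
  rw [imageLength_succ] at h₂
  obtain hm | hm : m = imageLength a w' t ∨ m = imageLength a w' t + 1 := by
    split_ifs at h₂ <;> omega
  · refine ⟨0, zero_le_one, ?_⟩
    rw [hm, List.replicate_zero, List.append_nil]
    exact hS t
  · refine ⟨1, le_rfl, ?_⟩
    rw [hm, prefixW_succ, apply_imageLength_of_substOfInf hS, List.replicate_one]
    exact congrArg (· ++ [a]) (hS t)

end Substitution

section Frequencies

variable {A : Type*} [Fintype A] {a : A} {f : A → ℚ}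

lemma two_sub_apply_pos_of_mem_stdSimplex (hf : f ∈ stdSimplex ℚ A) : 0 < 2 - f a := by
  linarith [(mem_Icc_of_mem_stdSimplex hf a).2]

variable [DecidableEq A]

/-- If `f` is the frequency vector of a word `w'`, then `freqStep a f` is that of the image of `w'`
under the Arnoux-Rauzy substitution `a ↦ a`, `b ↦ a b` (`b ≠ a`). -/
def freqStep (a : A) (f : A → ℚ) : A → ℚ :=
  fun j ↦ (if j = a then 1 else f j) / (2 - f a)

lemma freqStep_mem_stdSimplex (hf : f ∈ stdSimplex ℚ A) :
    freqStep a f ∈ stdSimplex ℚ A := by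
  have hD := two_sub_apply_pos_of_mem_stdSimplex (a := a) hf
  refine ⟨fun j ↦ div_nonneg ?_ hD.le, ?_⟩
  · split_ifs
    exacts [zero_le_one, hf.1 j]
  · have hnum : ∀ j, (if j = a then 1 else f j) = f j + if j = a then 1 - f a else 0 := by
      intro j
      split_ifs with hj
      · rw [hj]; ring
      · ring
    simp only [freqStep, ← Finset.sum_div, hnum, Finset.sum_add_distrib, hf.2,
      Finset.sum_ite_eq', Finset.mem_univ, if_true]
    field_simp
    ring

lemma half_le_freqStep_self (hf : f ∈ stdSimplex ℚ A) : 1 / 2 ≤ freqStep a f a := by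
  have hD := two_sub_apply_pos_of_mem_stdSimplex (a := a) hf
  rw [freqStep, if_pos rfl]
  gcongr
  linarith [hf.1 a]

lemma apply_div_two_le_freqStep (hf : f ∈ stdSimplex ℚ A) (j : A) :
    f j / 2 ≤ freqStep a f j := by
  have hD := two_sub_apply_pos_of_mem_stdSimplex (a := a) hf
  have hnum : f j ≤ if j = a then 1 else f j := by
    split_ifs
    exacts [(mem_Icc_of_mem_stdSimplex hf j).2, le_rfl]
  rw [freqStep]
  gcongr
  · split_ifs
    exacts [zero_le_one, hf.1 j]
  · linarith [hf.1 a]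

/-- Approximate letter frequencies at level `k` of a word with directive sequence `a`, seen from
level `k + s`. -/
def freqFrom (a : ℕ → A) : ℕ → ℕ → A → ℚ
  | k, 0 => Pi.single (a k) 1
  | k, s + 1 => freqStep (a k) (freqFrom a (k + 1) s)

lemma freqFrom_mem_stdSimplex (a : ℕ → A) (k s : ℕ) :
    freqFrom a k s ∈ stdSimplex ℚ A := by
  induction s generalizing k with
  | zero => exact single_mem_stdSimplex ℚ (a k)
  | succ s ih => exact freqStep_mem_stdSimplex (ih (k + 1))

lemma half_pow_le_freqFrom {a : ℕ → A} {k s t : ℕ} (ht : t < s) {j : A}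
    (hj : a (k + t) = j) : (1 / 2 : ℚ) ^ (t + 1) ≤ freqFrom a k s j := by
  obtain ⟨s, rfl⟩ : ∃ s', s = s' + 1 := ⟨s - 1, by omega⟩
  induction t generalizing k s with
  | zero =>
    subst hj
    simpa [freqFrom] using half_le_freqStep_self (freqFrom_mem_stdSimplex a (k + 1) s)
  | succ t ih =>
    obtain ⟨s, rfl⟩ : ∃ s', s = s' + 1 := ⟨s - 1, by omega⟩
    calc (1 / 2 : ℚ) ^ (t + 1 + 1) = (1 / 2) ^ (t + 1) / 2 := by ring
      _ ≤ freqFrom a (k + 1) (s + 1) j / 2 :=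
        div_le_div_of_nonneg_right (ih (k := k + 1) (by rw [← hj]; congr 1; omega) s (by omega))
          zero_le_two
      _ ≤ freqFrom a k (s + 1 + 1) j :=
          apply_div_two_le_freqStep (freqFrom_mem_stdSimplex a _ _) j

def deviation (p : List (A)) (f : A → ℚ) : A → ℚ :=
  fun j ↦ p.count j - p.length * f j

lemma sum_deviation (p : List (A)) (hf : f ∈ stdSimplex ℚ A) :
    ∑ j, deviation p f j = 0 := by
  have hcount : ∑ j, (p.count j : ℚ) = p.length := by
    have := Multiset.sum_count_eq_card (s := Finset.univ) (m := (p : Multiset (A))) (by simp)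
    simp only [Multiset.coe_count, Multiset.coe_card] at this
    exact_mod_cast this
  simp [deviation, Finset.sum_sub_distrib, ← Finset.mul_sum, hcount, hf.2]

lemma sum_abs_single_sub_le (hf : f ∈ stdSimplex ℚ A) :
    ∑ j, |(Pi.single a 1 - f : A → ℚ) j| ≤ 2 := by
  calc ∑ j, |(Pi.single a 1 - f : A → ℚ) j|
      ≤ ∑ j, ((Pi.single a 1 : A → ℚ) j + f j) := by
        gcongr with j
        refine (abs_sub _ _).trans_eq ?_
        rw [abs_of_nonneg ((single_mem_stdSimplex ℚ a).1 j), abs_of_nonneg (hf.1 j)]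
    _ = 2 := by rw [Finset.sum_add_distrib, (single_mem_stdSimplex ℚ a).2, hf.2]; norm_num

end Frequencies

section Deviation

variable {d : ℕ} {a : Fin d} {f : Fin d → ℚ}

lemma deviation_applySub_append_replicate (hf : f ∈ stdSimplex ℚ (Fin d)) (p : List (Fin d))
    (e : ℕ) : deviation (applySub (ARsub d a) p ++ List.replicate e a) (freqStep a f) =
      (1 : Matrix (Fin d) (Fin d) ℚ).updateCol a (freqStep a f) *ᵥ deviation p f +
        (e : ℚ) • (Pi.single a 1 - freqStep a f : Fin d → ℚ) := by
  have hD := (two_sub_apply_pos_of_mem_stdSimplex (a := a) hf).ne'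
  have hlen : ((applySub (ARsub d a) p).length : ℚ) = 2 * p.length - p.count a := by
    have := length_applySub_ARsub_add_count a p
    rw [eq_sub_iff_add_eq]
    exact_mod_cast this
  ext j
  simp only [deviation, Pi.add_apply, Pi.smul_apply, Pi.sub_apply, smul_eq_mul,
    updateCol_one_mulVec_apply, List.count_append, List.length_append, List.length_replicate,
    count_applySub_ARsub, List.count_replicate, Nat.cast_add, hlen]
  rcases eq_or_ne j a with rfl | hj
  · simp only [freqStep, ↓reduceIte, BEq.rfl, Pi.single_eq_same]
    field_simp
    ring
  · simp only [freqStep, hj, hj.symm, ↓reduceIte, beq_iff_eq, Nat.cast_zero, ne_eq,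
      not_false_eq_true, Pi.single_eq_of_ne]
    field_simp
    ring

lemma sum_abs_deviation_sub_le (hf : f ∈ stdSimplex ℚ (Fin d)) (p : List (Fin d)) {e : ℕ}
    (he : e ≤ 1) :
    ∑ j, |(deviation (applySub (ARsub d a) p ++ List.replicate e a) (freqStep a f) -
      (1 : Matrix (Fin d) (Fin d) ℚ).updateCol a (freqStep a f) *ᵥ deviation p f) j| ≤ 2 := by
  have he' : (e : ℚ) ≤ 1 := by exact_mod_cast he
  rw [deviation_applySub_append_replicate hf, add_sub_cancel_left]
  calc ∑ j, |((e : ℚ) • (Pi.single a 1 - freqStep a f : Fin d → ℚ)) j|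
      = e * ∑ j, |(Pi.single a 1 - freqStep a f : Fin d → ℚ) j| := by
        simp [abs_mul, Finset.mul_sum]
    _ ≤ 1 * 2 := by
        gcongr
        exact sum_abs_single_sub_le (freqStep_mem_stdSimplex hf)
    _ = 2 := one_mul 2

end Deviation

section Levels

variable {d : ℕ} (i : ℕ → Fin d) (Ω : ℕ → ℕ → Fin d)

def desubChain (m : ℕ) : ℕ → ℕ
  | 0 => m
  | n + 1 => desubLength (i n) (Ω (n + 1)) (desubChain m n)

def levelFreq (N n : ℕ) : Fin d → ℚ := freqFrom i n (N - n)

def levelMatrix (N n : ℕ) : Matrix (Fin d) (Fin d) ℚ :=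
  (1 : Matrix (Fin d) (Fin d) ℚ).updateCol (i n) (levelFreq i N n)

def levelDeviation (N m n : ℕ) : Fin d → ℚ :=
  deviation (prefixW (Ω n) (desubChain i Ω m n)) (levelFreq i N n)

lemma desubChain_antitone (m : ℕ) : Antitone (desubChain i Ω m) :=
  antitone_nat_of_succ_le fun _ ↦ desubLength_le _ _ _

lemma levelFreq_mem_stdSimplex (N n : ℕ) : levelFreq i N n ∈ stdSimplex ℚ (Fin d) :=
  freqFrom_mem_stdSimplex i n (N - n)

lemma levelFreq_of_lt {N n : ℕ} (hn : n < N) :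
    levelFreq i N n = freqStep (i n) (levelFreq i N (n + 1)) := by
  rw [levelFreq, show N - n = N - (n + 1) + 1 by omega]
  rfl

lemma levelMatrix_mem_colStochastic (N n : ℕ) : levelMatrix i N n ∈ colStochastic ℚ (Fin d) :=
  updateCol_one_mem_colStochastic _ (levelFreq_mem_stdSimplex i N n)

variable {i Ω} {h : ℕ}

lemma half_pow_le_levelFreq
    (hw : ∀ n, Finset.image (fun t ↦ i (n + t)) (Finset.range h) = .univ)
    {N k : ℕ} (hk : k + h ≤ N) (j : Fin d) : (1 / 2 : ℚ) ^ h ≤ levelFreq i N k j := by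
  obtain ⟨t, ht, hj⟩ := exists_lt_apply_eq_of_image_eq_univ (hw k) j
  calc (1 / 2 : ℚ) ^ h ≤ (1 / 2) ^ (t + 1) :=
        pow_le_pow_of_le_one (by norm_num) (by norm_num) ht
    _ ≤ levelFreq i N k j := half_pow_le_freqFrom (by omega) hj

variable (hS : ∀ n, SubstOfInf (ARsub d (i n)) (Ω (n + 1)) (Ω n))
include hS

lemma sum_abs_levelDeviation_sub_le {N n : ℕ} (hn : n < N) (m : ℕ) :
    ∑ j, |(levelDeviation i Ω N m n -
      levelMatrix i N n *ᵥ levelDeviation i Ω N m (n + 1)) j| ≤ 2 := by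
  obtain ⟨e, he, hpre⟩ := exists_prefixW_eq_applySub (hS n) (desubChain i Ω m n)
  rw [levelDeviation, levelDeviation, hpre, levelMatrix, levelFreq_of_lt i hn]
  exact sum_abs_deviation_sub_le (levelFreq_mem_stdSimplex i N (n + 1)) _ he

lemma sum_abs_levelDeviation_le_one_sub_mul_add
    (hw : ∀ n, Finset.image (fun t ↦ i (n + t)) (Finset.range h) = .univ)
    {N n : ℕ} (hn : n + 2 * h ≤ N) (m : ℕ) :
    ∑ j, |levelDeviation i Ω N m n j| ≤
      (1 - (1 / 2 : ℚ) ^ (h * h)) * ∑ j, |levelDeviation i Ω N m (n + h) j| + 2 * h := by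
  set x := levelDeviation i Ω N m
  set P := windowProd (levelMatrix i N) n h
  have hT := levelMatrix_mem_colStochastic i N
  have herr : ∑ j, |(x n - P *ᵥ x (n + h)) j| ≤ h * 2 :=
    sum_abs_sub_windowProd_mulVec_le hT fun k _ hk ↦
      sum_abs_levelDeviation_sub_le hS (by omega) m
  -- The frequency bound at a level `k < n + h` uses the window `[k, k + h)`, hence `n + 2h ≤ N`.
  have hP : ∀ j l, (1 / 2 : ℚ) ^ (h * h) ≤ P j l := by
    intro j l
    rw [pow_mul]
    refine pow_le_windowProd_apply hT (a := i) (by positivity) (fun k _ hk j ↦ ?_)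
      (fun k _ hk j ↦ ?_) (.inr ?_)
    · rw [levelMatrix, updateCol_apply, one_apply_eq]
      split_ifs with hj
      · exact half_pow_le_levelFreq hw (by omega) j
      · exact pow_le_one₀ (by norm_num) (by norm_num)
    · rw [levelMatrix, updateCol_self]
      exact half_pow_le_levelFreq hw (by omega) j
    · obtain ⟨t, ht, hl⟩ := exists_lt_apply_eq_of_image_eq_univ (hw n) l
      exact ⟨n + t, by omega, by omega, hl⟩
  have hcontr := sum_abs_mulVec_le_of_le_apply (windowProd_mem_colStochastic hT n h) hP
    (x := x (n + h)) (sum_deviation _ (levelFreq_mem_stdSimplex i N (n + h)))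
  have hd : (1 : ℚ) ≤ Fintype.card (Fin d) := by
    rw [Fintype.card_fin]
    exact Nat.one_le_cast.2 (i 0).pos
  calc ∑ j, |x n j| ≤ ∑ j, |(x n - P *ᵥ x (n + h)) j| + ∑ j, |(P *ᵥ x (n + h)) j| := by
        rw [← Finset.sum_add_distrib]
        refine Finset.sum_le_sum fun j _ ↦ ?_
        simpa using abs_add_le (x n j - (P *ᵥ x (n + h)) j) ((P *ᵥ x (n + h)) j)
    _ ≤ h * 2 + (1 - Fintype.card (Fin d) * (1 / 2 : ℚ) ^ (h * h)) * ∑ j, |x (n + h) j| :=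
        add_le_add herr hcontr
    _ ≤ (1 - (1 / 2 : ℚ) ^ (h * h)) * ∑ j, |x (n + h) j| + 2 * h := by
        have hsum : (0 : ℚ) ≤ ∑ j, |x (n + h) j| := Finset.sum_nonneg fun j _ ↦ abs_nonneg _
        have := mul_le_mul_of_nonneg_right
          (le_mul_of_one_le_left (b := (1 / 2 : ℚ) ^ (h * h)) (by positivity) hd) hsum
        linarith

lemma desubChain_add_lt (hw : ∀ n, Finset.image (fun t ↦ i (n + t)) (Finset.range h) = .univ)
    (hd : 2 ≤ d) {m n : ℕ} (hm : 0 < desubChain i Ω m n) :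
    desubChain i Ω m (n + h) < desubChain i Ω m n := by
  obtain ⟨t, ht, hne⟩ :=
    exists_apply_succ_ne (x := (⟨0, by omega⟩ : Fin d)) (y := ⟨1, hd⟩)
      (by simp [Fin.ext_iff]) (exists_lt_apply_eq_of_image_eq_univ (hw n) _)
      (exists_lt_apply_eq_of_image_eq_univ (hw n) _)
  have hhead : Ω (n + t + 1) 0 ≠ i (n + t) := by
    rw [apply_zero_of_substOfInf (hS (n + t + 1))]
    exact hne
  have hanti := desubChain_antitone i Ω m
  have h₁ := hanti (show n ≤ n + t by omega)
  have h₂ := hanti (show n + t + 1 ≤ n + h by omega)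
  rcases Nat.eq_zero_or_pos (desubChain i Ω m (n + t)) with h₀ | hpos
  · have := hanti (show n + t ≤ n + h by omega)
    omega
  · have : desubChain i Ω m (n + t + 1) < desubChain i Ω m (n + t) :=
      desubLength_lt _ _ hhead hpos
    omega

lemma desubChain_mul_eq_zero
    (hw : ∀ n, Finset.image (fun t ↦ i (n + t)) (Finset.range h) = .univ) (hd : 2 ≤ d)
    (m : ℕ) :
    desubChain i Ω m (h * m) = 0 := by
  suffices ∀ t, desubChain i Ω m (h * t) ≤ m - t by simpa using this m
  intro t
  induction t with
  | zero => simp [desubChain]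
  | succ t ih =>
    rw [mul_add_one]
    rcases Nat.eq_zero_or_pos (desubChain i Ω m (h * t)) with h₀ | hpos
    · have := desubChain_antitone i Ω m (show h * t ≤ h * t + h by omega)
      omega
    · have := desubChain_add_lt hS hw hd hpos
      omega

lemma abs_count_prefixW_sub_le
    (hw : ∀ n, Finset.image (fun t ↦ i (n + t)) (Finset.range h) = .univ) (hd : 2 ≤ d)
    {K m : ℕ} (hm : m ≤ K) (j : Fin d) :
    |((prefixW (Ω 0) m).count j : ℚ) - m * freqFrom i 0 (h * K + 2 * h) j| ≤
      ((2 * h * 2 ^ (h * h) : ℕ) : ℚ) := by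
  set N := h * K + 2 * h with hN
  have hη : (0 : ℚ) < (1 / 2) ^ (h * h) := by positivity
  have hbound := le_div_of_forall_le_one_sub_mul_add
    (b := fun t ↦ ∑ j, |levelDeviation i Ω N m (h * t) j|) (c := 2 * h) hη
    (pow_le_one₀ (by norm_num) (by norm_num)) (K := m)
    (fun t ht ↦ by
      simpa [mul_add_one] using sum_abs_levelDeviation_le_one_sub_mul_add hS hw (n := h * t)
        (by have := Nat.mul_le_mul_left h (show t ≤ K by omega); omega) m)
    (by simp [levelDeviation, desubChain_mul_eq_zero hS hw hd, prefixW, deviation])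
    (Nat.zero_le m)
  have hdev : levelDeviation i Ω N m 0 j =
      (prefixW (Ω 0) m).count j - m * freqFrom i 0 N j := by
    simp [levelDeviation, deviation, levelFreq, desubChain]
  rw [← hdev]
  refine (Finset.single_le_sum (f := fun j ↦ |levelDeviation i Ω N m 0 j|)
    (fun _ _ ↦ abs_nonneg _) (Finset.mem_univ j)).trans ?_
  simpa [div_inv_eq_mul] using hbound

end Levels

end ArnouxRauzy

theorem stmt9 (h : ℕ) :
    ∃ C : ℕ, ∀ (d : ℕ) (i : ℕ → Fin d) (ω : ℕ → Fin d) (Ω : ℕ → ℕ → Fin d),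
      (∀ n : ℕ, Finset.image (fun t => i (n + t)) (Finset.range h) = Finset.univ) →
      Ω 0 = ω →
      (∀ n : ℕ, SubstOfInf (ARsub d (i n)) (Ω (n + 1)) (Ω n)) →
      BalancedWord C ω := by
  refine ⟨4 * (2 * h * 2 ^ (h * h)), fun d i ω Ω hw hΩ hS ↦ ?_⟩
  subst hΩ
  rcases lt_or_ge d 2 with hd | hd
  · have : Subsingleton (Fin d) := Fin.subsingleton_iff_le_one.2 (by omega)
    exact ArnouxRauzy.balancedWord_of_subsingleton _ _
  · exact ArnouxRauzy.balancedWord_of_abs_count_prefixW_sub_le _ _ fun K ↦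
      ⟨_, fun m hm j ↦ ArnouxRauzy.abs_count_prefixW_sub_le hS hw hd hm j⟩
end

section
/- Let ω be a Brun word over 3 letters with directive sequence (β_{i_n j_n})_{n∈ℕ}, and let f^{(n)} be the normalized frequency vector of ω^{(n)}. Then f^{(n−h)}_{i_n} ≥ 1/(F_{h+1} + 1) for all h ≤ n, where (F_n) are the Fibonacci numbers with F_0 = 1, F_1 = 2, F_n = F_{n−1} + F_{n−2}. -/
open Matrix

def brunSub (i j : Fin 3) : Fin 3 → List (Fin 3) := fun k => if k = j then [i, j] else [k]

def brunMat (i j : Fin 3) : Matrix (Fin 3) (Fin 3) ℝ :=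
  Matrix.of fun r c => (if r = c then (1:ℝ) else 0) + (if r = i ∧ c = j then 1 else 0)

def fib2 : ℕ → ℕ
  | 0 => 1
  | 1 => 2
  | n + 2 => fib2 (n + 1) + fib2 n

noncomputable def brunFvec (i j : ℕ → Fin 3) (f : Fin 3 → ℝ) (n : ℕ) : Fin 3 → ℝ :=
  fun r => ((prodSeq (fun m => brunMat (i m) (j m)) n)⁻¹.mulVec f) r /
    ∑ c, ((prodSeq (fun m => brunMat (i m) (j m)) n)⁻¹.mulVec f) c

/-! The normalised vectors `f⁽ⁿ⁾` are the letter frequencies of the desubstituted words `ω⁽ⁿ⁾`: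
applying the inverse of a Brun matrix to a frequency vector and renormalising gives the
frequencies of the preimage word, and the renormalisation is harmless because the letter `jₙ` has
frequency at most `1/2` in a `β_{iₙjₙ}`-image. So the unnormalised vectors `vₙ = M_{[0,n)}⁻¹ f` are
nonnegative and satisfy `vₙ = Mₙ vₙ₊₁`, which only adds coordinate `jₙ` to coordinate `iₙ`.

Admissibility makes `n ↦ vₙ(iₙ)` nonincreasing, and since every letter `a` comes back as some
`i_m` while coordinate `a` stays frozen until then, `vₙ` is maximal at `iₙ`. Going back `h` steps
from `n`, every coordinate of `v_{n-h}` is at most `F_h · v_{n-h}(iₙ)` and every sum of two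
coordinates at most `F_{h+1} · v_{n-h}(iₙ)`, the Fibonacci recursion coming from the one addition
made at each step (here `F_h = Nat.fib (h + 2)`). Adding `v_{n-h}(iₙ)` to the two other
coordinates gives `∑ v_{n-h} ≤ (F_{h+1} + 1) · v_{n-h}(iₙ)`. -/

open Filter Topology

lemma count_brunSub (i j b a : Fin 3) :
    (brunSub i j b).count a = (if a = b then 1 else 0) + (if b = j ∧ a = i then 1 else 0) := by
  revert i j b a; decide

lemma count_applySub_brunSub {i j : Fin 3} (hij : i ≠ j) (l : List (Fin 3)) (a : Fin 3) :
    (applySub (brunSub i j) l).count a = l.count a + if a = i then l.count j else 0 := by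
  induction l with
  | nil => simp [applySub]
  | cons b t ih =>
    simp only [applySub, List.flatMap_cons, List.count_append, List.count_cons] at ih ⊢
    rw [ih, count_brunSub]
    split_ifs <;> simp_all <;> omega

lemma length_applySub_brunSub (i j : Fin 3) (l : List (Fin 3)) :
    (applySub (brunSub i j) l).length = l.length + l.count j := by
  induction l with
  | nil => simp [applySub]
  | cons b t ih =>
    simp only [applySub, List.flatMap_cons, List.length_append, List.length_cons,
      List.count_cons] at ih ⊢
    rw [ih]
    by_cases hb : b = j <;> simp [brunSub, hb] <;> omega

section Frequencies

variable {A : Type*} [DecidableEq A]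

def countVec (l : List A) : A → ℝ := fun a => l.count a

def HasFreq (w : ℕ → A) (φ : A → ℝ) : Prop :=
  Tendsto (fun n : ℕ => (n : ℝ)⁻¹ • countVec (prefixW w n)) atTop (𝓝 φ)

lemma hasFreq_iff {w : ℕ → A} {φ : A → ℝ} :
    HasFreq w φ ↔
      ∀ a, Tendsto (fun n => ((prefixW w n).count a : ℝ) / n) atTop (𝓝 (φ a)) := by
  simp only [HasFreq, tendsto_pi_nhds, countVec, Pi.smul_apply, smul_eq_mul, inv_mul_eq_div]

lemma sum_countVec [Fintype A] (l : List A) : ∑ a, countVec l a = l.length := by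
  simp only [countVec]
  have h := Multiset.sum_count_eq_card (s := Finset.univ) (m := (l : Multiset A)) (by simp)
  simp only [Multiset.coe_count, Multiset.coe_card] at h
  exact_mod_cast h

lemma HasFreq.nonneg {w : ℕ → A} {φ : A → ℝ} (h : HasFreq w φ) (a : A) : 0 ≤ φ a :=
  ge_of_tendsto' (tendsto_pi_nhds.mp h a) fun n => by
    simp only [Pi.smul_apply, countVec]; positivity

lemma HasFreq.sum_eq_one [Fintype A] {w : ℕ → A} {φ : A → ℝ} (h : HasFreq w φ) :
    ∑ a, φ a = 1 := by
  have hsum := ((continuous_finsetSum Finset.univ fun a _ => continuous_apply a).tendsto φ).comp h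
  refine tendsto_nhds_unique hsum (tendsto_const_nhds.congr' ?_)
  filter_upwards [eventually_gt_atTop 0] with n hn
  simp [← Finset.mul_sum, sum_countVec, prefixW, hn.ne']

end Frequencies

lemma brunMat_mulVec (i j : Fin 3) (v : Fin 3 → ℝ) :
    brunMat i j *ᵥ v = fun r => v r + if r = i then v j else 0 := by
  funext r
  simp only [mulVec, dotProduct, brunMat, of_apply, add_mul, Finset.sum_add_distrib]
  by_cases h : r = i <;> simp [h, ite_mul]

lemma det_brunMat {i j : Fin 3} (hij : i ≠ j) : (brunMat i j).det = 1 := by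
  fin_cases i <;> fin_cases j <;> simp_all [brunMat, det_fin_three]

lemma brunMat_inv_mulVec_mulVec {i j : Fin 3} (hij : i ≠ j) (v : Fin 3 → ℝ) :
    (brunMat i j)⁻¹ *ᵥ (brunMat i j *ᵥ v) = v := by
  rw [mulVec_mulVec, nonsing_inv_mul _ (by simp [det_brunMat hij]), one_mulVec]

lemma brunMat_mulVec_inv_mulVec {i j : Fin 3} (hij : i ≠ j) (v : Fin 3 → ℝ) :
    brunMat i j *ᵥ ((brunMat i j)⁻¹ *ᵥ v) = v := by
  rw [mulVec_mulVec, mul_nonsing_inv _ (by simp [det_brunMat hij]), one_mulVec]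

lemma countVec_applySub_brunSub {i j : Fin 3} (hij : i ≠ j) (l : List (Fin 3)) :
    countVec (applySub (brunSub i j) l) = brunMat i j *ᵥ countVec l := by
  ext a
  simp only [countVec, count_applySub_brunSub hij, brunMat_mulVec]
  split_ifs <;> simp

section BrunFrequencies

variable {i j : Fin 3} {w w' : ℕ → Fin 3} {φ : Fin 3 → ℝ}

-- No nonemptiness assumption is needed: for `l = []` both sides vanish as `(0 : ℝ)⁻¹ = 0`.
lemma smul_brunMat_inv_mulVec_countVec (hij : i ≠ j) (l : List (Fin 3)) :
    (1 - ((applySub (brunSub i j) l).length : ℝ)⁻¹ * countVec (applySub (brunSub i j) l) j)⁻¹ •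
        (brunMat i j)⁻¹ *ᵥ
          (((applySub (brunSub i j) l).length : ℝ)⁻¹ • countVec (applySub (brunSub i j) l)) =
      (l.length : ℝ)⁻¹ • countVec l := by
  rw [countVec_applySub_brunSub hij, mulVec_smul, brunMat_inv_mulVec_mulVec hij, smul_smul,
    length_applySub_brunSub, brunMat_mulVec]
  congr 1
  simp only [if_neg hij.symm, add_zero, countVec]
  by_cases hl : l = []
  · simp [hl]
  have hpos : (0 : ℝ) < l.length := by exact_mod_cast List.length_pos_iff.mpr hl
  push_cast
  field_simp
  rw [add_sub_cancel_right, div_self hpos.ne']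

lemma HasFreq.tendsto_applySub_brunSub (hsub : SubstOfInf (brunSub i j) w' w)
    (h : HasFreq w φ) :
    Tendsto (fun m => ((applySub (brunSub i j) (prefixW w' m)).length : ℝ)⁻¹ •
      countVec (applySub (brunSub i j) (prefixW w' m))) atTop (𝓝 φ) := by
  have hL : Tendsto (fun m => (applySub (brunSub i j) (prefixW w' m)).length) atTop atTop :=
    tendsto_atTop_mono (fun m => by simp [length_applySub_brunSub, prefixW]) tendsto_id
  exact (h.comp hL).congr fun m => by rw [Function.comp_apply, hsub m]

lemma HasFreq.le_half_of_brunSub (hij : i ≠ j) (hsub : SubstOfInf (brunSub i j) w' w)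
    (h : HasFreq w φ) : φ j ≤ 1 / 2 := by
  refine le_of_tendsto' (tendsto_pi_nhds.mp (h.tendsto_applySub_brunSub hsub) j) fun m => ?_
  simp only [Pi.smul_apply, smul_eq_mul, countVec, count_applySub_brunSub hij,
    length_applySub_brunSub, if_neg hij.symm, add_zero, inv_mul_eq_div]
  have hle : ((prefixW w' m).count j : ℝ) ≤ (prefixW w' m).length := by
    exact_mod_cast List.count_le_length
  apply div_le_of_le_mul₀ (by positivity) (by norm_num)
  push_cast
  linarith

lemma HasFreq.preimage_brunSub (hij : i ≠ j) (hsub : SubstOfInf (brunSub i j) w' w)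
    (h : HasFreq w φ) : HasFreq w' ((1 - φ j)⁻¹ • (brunMat i j)⁻¹ *ᵥ φ) := by
  have hφj : 1 - φ j ≠ 0 := by linarith [h.le_half_of_brunSub hij hsub]
  have hcont : ContinuousAt (fun x : Fin 3 → ℝ => (1 - x j)⁻¹ • (brunMat i j)⁻¹ *ᵥ x) φ :=
    ((continuousAt_const.sub (continuous_apply j).continuousAt).inv₀ hφj).smul
      (continuous_const.matrix_mulVec continuous_id).continuousAt
  have := hcont.tendsto.comp (h.tendsto_applySub_brunSub hsub)
  simpa only [HasFreq, Function.comp_def, Pi.smul_apply, smul_eq_mul,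
    smul_brunMat_inv_mulVec_countVec hij, prefixW, List.length_map,
    List.length_range] using this

end BrunFrequencies

section BrunVec

variable {i j : ℕ → Fin 3} {f : Fin 3 → ℝ}

noncomputable def brunVec (i j : ℕ → Fin 3) (f : Fin 3 → ℝ) (n : ℕ) : Fin 3 → ℝ :=
  (prodSeq (fun m => brunMat (i m) (j m)) n)⁻¹ *ᵥ f

lemma brunVec_succ (n : ℕ) :
    brunVec i j f (n + 1) = (brunMat (i n) (j n))⁻¹ *ᵥ brunVec i j f n := by
  rw [brunVec, brunVec, prodSeq, Matrix.mul_inv_rev, mulVec_mulVec]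

lemma brunVec_apply {n : ℕ} (hij : i n ≠ j n) (a : Fin 3) :
    brunVec i j f n a =
      brunVec i j f (n + 1) a + if a = i n then brunVec i j f (n + 1) (j n) else 0 := by
  conv_lhs => rw [← brunMat_mulVec_inv_mulVec hij (brunVec i j f n), ← brunVec_succ,
    brunMat_mulVec]

lemma exists_hasFreq_brunVec (hij : ∀ n, i n ≠ j n) {Ω : ℕ → ℕ → Fin 3}
    (hΩ : ∀ n, SubstOfInf (brunSub (i n) (j n)) (Ω (n + 1)) (Ω n)) (hf : HasFreq (Ω 0) f) :
    ∀ n, ∃ c : ℝ, 0 < c ∧ ∃ φ, HasFreq (Ω n) φ ∧ brunVec i j f n = c • φ := by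
  intro n
  induction n with
  | zero => exact ⟨1, one_pos, f, hf, by simp [brunVec, prodSeq]⟩
  | succ n ih =>
    obtain ⟨c, hc, φ, hφ, hv⟩ := ih
    have hφj := hφ.le_half_of_brunSub (hij n) (hΩ n)
    refine ⟨c * (1 - φ (j n)), by nlinarith, _, hφ.preimage_brunSub (hij n) (hΩ n), ?_⟩
    rw [brunVec_succ, hv, mulVec_smul, smul_smul, mul_assoc, mul_inv_cancel₀ (by linarith),
      mul_one]

end BrunVec

lemma fib2_eq_fib : ∀ n, fib2 n = Nat.fib (n + 2)
  | 0 => rfl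
  | 1 => rfl
  | n + 2 => by
    rw [fib2, fib2_eq_fib n, fib2_eq_fib (n + 1), Nat.fib_add_two (n := n + 2), add_comm]

lemma sum_fin_three_le_add {v : Fin 3 → ℝ} {K : ℝ} (h : ∀ a b, a ≠ b → v a + v b ≤ K)
    (c : Fin 3) : ∑ a, v a ≤ v c + K := by
  rw [Fin.sum_univ_three]
  fin_cases c <;> dsimp <;> linarith [h 1 2 (by decide), h 0 2 (by decide), h 0 1 (by decide)]

section BrunRecursion

variable {i j : ℕ → Fin 3} {v : ℕ → Fin 3 → ℝ}

lemma apply_succ_le (hv : ∀ n a, v n a = v (n + 1) a + if a = i n then v (n + 1) (j n) else 0)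
    (hnn : ∀ n a, 0 ≤ v n a) (n : ℕ) (a : Fin 3) : v (n + 1) a ≤ v n a := by
  rw [hv n a]
  split_ifs
  · linarith [hnn (n + 1) (j n)]
  · rw [add_zero]

lemma antitone_apply_self
    (hv : ∀ n a, v n a = v (n + 1) a + if a = i n then v (n + 1) (j n) else 0)
    (hnn : ∀ n a, 0 ≤ v n a)
    (hadm : ∀ n, (i (n + 1) = i n ∧ j (n + 1) = j n) ∨ i (n + 1) = j n) :
    Antitone fun n => v n (i n) := by
  refine antitone_nat_of_succ_le fun n => ?_
  rcases hadm n with ⟨h, -⟩ | h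
  · rw [h]; exact apply_succ_le hv hnn n (i n)
  · rw [h, hv n (i n), if_pos rfl]
    linarith [hnn (n + 1) (i n)]

lemma apply_le_apply_self
    (hv : ∀ n a, v n a = v (n + 1) a + if a = i n then v (n + 1) (j n) else 0)
    (hnn : ∀ n a, 0 ≤ v n a)
    (hadm : ∀ n, (i (n + 1) = i n ∧ j (n + 1) = j n) ∨ i (n + 1) = j n)
    (hinf : ∀ a : Fin 3, ∀ N : ℕ, ∃ n ≥ N, i n = a) (p : ℕ) (a : Fin 3) :
    v p a ≤ v p (i p) := by
  classical
  have hex : ∃ m, p ≤ m ∧ i m = a := hinf a p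
  obtain ⟨hpm, hma⟩ := Nat.find_spec hex
  have hconst : ∀ q, p ≤ q → q ≤ Nat.find hex → v p a = v q a := by
    intro q hpq
    induction q, hpq using Nat.le_induction with
    | base => exact fun _ => rfl
    | succ q hpq ih =>
      intro hq
      have hqa : i q ≠ a := fun h => Nat.find_min hex (by omega) ⟨hpq, h⟩
      rw [ih (by omega), hv q a, if_neg (Ne.symm hqa), add_zero]
  calc v p a = v (Nat.find hex) (i (Nat.find hex)) := by rw [hma]; exact hconst _ hpm le_rfl
    _ ≤ v p (i p) := antitone_apply_self hv hnn hadm hpm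

lemma apply_le_fib_mul (hij : ∀ n, i n ≠ j n)
    (hv : ∀ n a, v n a = v (n + 1) a + if a = i n then v (n + 1) (j n) else 0)
    (hnn : ∀ n a, 0 ≤ v n a) (hdom : ∀ n a, v n a ≤ v n (i n)) (t q : ℕ) :
    (∀ a, v q a ≤ Nat.fib (t + 2) * v q (i (q + t))) ∧
      ∀ a b, a ≠ b → v q a + v q b ≤ Nat.fib (t + 3) * v q (i (q + t)) := by
  induction t generalizing q with
  | zero =>
    have h3 : (Nat.fib 3 : ℝ) = 2 := by norm_num [Nat.fib_add_two]
    simp only [add_zero, zero_add, Nat.fib_two, Nat.cast_one, one_mul, h3]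
    exact ⟨hdom q, fun a b _ => by linarith [hdom q a, hdom q b]⟩
  | succ t ih =>
    obtain ⟨hA, hB⟩ := ih (q + 1)
    rw [show q + 1 + t = q + (t + 1) by ring] at hA hB
    set x' := v (q + 1) (i (q + (t + 1)))
    set x := v q (i (q + (t + 1)))
    show (∀ a, v q a ≤ Nat.fib (t + 3) * x) ∧
      ∀ a b, a ≠ b → v q a + v q b ≤ Nat.fib (t + 4) * x
    have hx' : 0 ≤ x' := hnn _ _
    have hscale : ∀ c : ℕ, (c : ℝ) * x' ≤ c * x := fun c =>
      mul_le_mul_of_nonneg_left (apply_succ_le hv hnn q _) c.cast_nonneg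
    have hmono : (Nat.fib (t + 2) : ℝ) * x' ≤ Nat.fib (t + 3) * x' :=
      mul_le_mul_of_nonneg_right (by exact_mod_cast Nat.fib_mono (by omega)) hx'
    have hfib : (Nat.fib (t + 4) : ℝ) * x' = Nat.fib (t + 3) * x' + Nat.fib (t + 2) * x' := by
      rw [Nat.fib_add_two (n := t + 2)]; push_cast; ring
    have hD : v (q + 1) (j q) ≤ Nat.fib (t + 2) * x' := hA (j q)
    refine ⟨fun a => ?_, fun a b hab => ?_⟩
    · rw [hv q a]
      split_ifs with ha
      · subst ha
        linarith [hB _ _ (hij q), hscale (Nat.fib (t + 3))]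
      · linarith [hA a, hscale (Nat.fib (t + 3))]
    · rw [hv q a, hv q b]
      split_ifs with ha hb hb
      · exact absurd (ha.trans hb.symm) hab
      · subst ha
        linarith [hB _ _ hab, hscale (Nat.fib (t + 4))]
      · subst hb
        linarith [hB _ _ hab, hscale (Nat.fib (t + 4))]
      · linarith [hB _ _ hab, hscale (Nat.fib (t + 4)),
          mul_nonneg (Nat.fib (t + 2)).cast_nonneg hx']

end BrunRecursion

theorem stmt10 (i j : ℕ → Fin 3) (hij : ∀ n, i n ≠ j n)
    (hadm : ∀ n, (i (n + 1) = i n ∧ j (n + 1) = j n) ∨ i (n + 1) = j n)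
    (hinf : ∀ a : Fin 3, ∀ N : ℕ, ∃ n ≥ N, i n = a)
    (ω : ℕ → Fin 3) (Ω : ℕ → ℕ → Fin 3) (hΩ0 : Ω 0 = ω)
    (hΩ : ∀ n, SubstOfInf (brunSub (i n) (j n)) (Ω (n + 1)) (Ω n))
    (f : Fin 3 → ℝ)
    (hf : ∀ a : Fin 3, Filter.Tendsto (fun n => (((prefixW ω n).count a : ℝ) / (n : ℝ)))
      Filter.atTop (nhds (f a))) :
    ∀ n t : ℕ, t ≤ n →
      brunFvec i j f (n - t) (i n) ≥ 1 / ((fib2 (t + 1) : ℝ) + 1) := by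
  intro n t ht
  have hfreq := exists_hasFreq_brunVec hij hΩ (hΩ0 ▸ hasFreq_iff.mpr hf)
  have hv := fun n => brunVec_apply (f := f) (hij n)
  have hnn : ∀ n a, 0 ≤ brunVec i j f n a := fun n a => by
    obtain ⟨c, hc, φ, hφ, hcφ⟩ := hfreq n
    rw [hcφ]
    exact mul_nonneg hc.le (hφ.nonneg a)
  have hsum : 0 < ∑ a, brunVec i j f (n - t) a := by
    obtain ⟨c, hc, φ, hφ, hcφ⟩ := hfreq (n - t)
    simpa [hcφ, ← Finset.mul_sum, hφ.sum_eq_one] using hc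
  obtain ⟨-, hpair⟩ :=
    apply_le_fib_mul hij hv hnn (apply_le_apply_self hv hnn hadm hinf) t (n - t)
  rw [Nat.sub_add_cancel ht] at hpair
  have hbound := sum_fin_three_le_add hpair (i n)
  show 1 / ((fib2 (t + 1) : ℝ) + 1) ≤
    brunVec i j f (n - t) (i n) / ∑ a, brunVec i j f (n - t) a
  rw [fib2_eq_fib, div_le_div_iff₀ (by positivity) hsum]
  linarith
end
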